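/- Buchberger's criterion: a finite generating set G = {g_1,...,g_t} of a polynomial ideal I is a Groebner basis for I if and only if for all pairs i ≠ j, the remainder of the S-polynomial S(g_i, g_j) on division by G (listed in some order) is zero. -/

import Mathlib

open MvPolynomial
open scoped MonomialOrder

variable {σ K : Type*}

/-- The leading (multidegree) exponent of a polynomial with respect to a monomial order:
the maximum, for the order, of the exponents appearing in `f`. -/
noncomputable def leadExp [Field K] (m : MonomialOrder σ) (f : MvPolynomial σ K) :
    σ →₀ ℕ :=
  m.toSyn.symm (f.support.sup fun d => m.toSyn d)

/-- The leading term of a polynomial with respect to a monomial order. -/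
noncomputable def leadTerm [Field K] (m : MonomialOrder σ) (f : MvPolynomial σ K) :
    MvPolynomial σ K :=
  monomial (leadExp m f) (f.coeff (leadExp m f))

/-- `G` is a Groebner basis of the ideal `I` for the monomial order `m`:
a finite subset of `I` whose leading terms generate the same ideal as the leading
terms of all (nonzero) elements of `I`. -/
def IsGroebnerBasis [Field K] (m : MonomialOrder σ) (I : Ideal (MvPolynomial σ K))
    (G : Set (MvPolynomial σ K)) : Prop :=
  G.Finite ∧ G ⊆ (I : Set (MvPolynomial σ K)) ∧
    Ideal.span (leadTerm m '' G) =
      Ideal.span (leadTerm m '' {f | f ∈ I ∧ f ≠ 0})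

/-- `r` is a remainder of `f` on division by `G` (relative to the ideal `I`):
`f - r ∈ I` and no monomial of `r` is divisible by the leading monomial of any
nonzero element of `G`. -/
def IsRemainder [Field K] (m : MonomialOrder σ) (I : Ideal (MvPolynomial σ K))
    (G : Set (MvPolynomial σ K)) (f r : MvPolynomial σ K) : Prop :=
  f - r ∈ I ∧
    ∀ c ∈ r.support, ∀ g ∈ G, g ≠ 0 → ¬ leadExp m g ≤ c

/-- The S-polynomial of two nonzero polynomials:
`S(f,g) = X^γ/LT(f) * f − X^γ/LT(g) * g` where `X^γ = lcm(LM f, LM g)`. -/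
noncomputable def sPoly [Field K] (m : MonomialOrder σ) (f g : MvPolynomial σ K) :
    MvPolynomial σ K :=
  monomial (leadExp m f ⊔ leadExp m g - leadExp m f) (f.coeff (leadExp m f))⁻¹ * f -
    monomial (leadExp m f ⊔ leadExp m g - leadExp m g) (g.coeff (leadExp m g))⁻¹ * g

/-- `r` is a remainder of `f` on division (by the division algorithm) by the finite set `G`:
there are quotients `a g` with `f = ∑ a g * g + r`, no monomial of `r` divisible by the
leading monomial of any element of `G`, and `multideg (a g * g) ≤ multideg f`. -/
def IsDivisionRemainder [Field K] (m : MonomialOrder σ) (G : Finset (MvPolynomial σ K))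
    (f r : MvPolynomial σ K) : Prop :=
  ∃ a : MvPolynomial σ K → MvPolynomial σ K,
    f = (∑ g ∈ G, a g * g) + r ∧
    (∀ c ∈ r.support, ∀ g ∈ G, ¬ leadExp m g ≤ c) ∧
    ∀ g ∈ G, a g * g ≠ 0 → (leadExp m (a g * g)) ≼[m] (leadExp m f)

/-!
Only the converse needs an argument. Let `Fδ` be the `K`-span of the products `X^α * g`,
`g ∈ G`, with `α + deg g ≼ δ`; every element of `(G)` lies in some `Fδ`. Take `δ` minimal with
`f ∈ Fδ`. If `deg f ≺ δ`, the products of degree exactly `δ` are scalar multiples of the monic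
polynomials `X^(δ - deg g) * g / lc g`, and their coefficients add up to `coeff δ f = 0`. Such a
combination is a combination of differences of these monic polynomials, and each difference is
`X^(δ - γ) * S(g, h)` with `γ = lcm (deg g) (deg h)`. A zero remainder of `S(g, h)` on division
by `G` writes it as a combination of products of degree `≼ deg S(g, h) ≺ γ`, so `f` lies in an
`Fδ'` with `δ' ≺ δ`, contradicting minimality. Hence `δ = deg f`, and some product of degree
`deg f` has a nonzero coefficient there, so `deg g ∣ deg f` for some `g ∈ G`.
-/

theorem MvPolynomial.monomial_mul_eq_smul {R : Type*} [CommSemiring R] (α : σ →₀ ℕ) (c : R)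
    (g : MvPolynomial σ R) : monomial α c * g = c • (monomial α 1 * g) := by
  rw [← smul_mul_assoc, smul_monomial, smul_eq_mul, mul_one]

open scoped Pointwise in
theorem Submodule.mem_span_sub_of_apply_eq_zero {R M : Type*} [Ring R] [AddCommGroup M]
    [Module R M] {s : Set M} (φ : M →ₗ[R] R) (hφ : ∀ v ∈ s, φ v = 1) {x : M}
    (hx : x ∈ span R s) (hx0 : φ x = 0) : x ∈ span R (s - s) := by
  rcases s.eq_empty_or_nonempty with rfl | ⟨v₀, hv₀⟩
  · simp_all
  suffices x - φ x • v₀ ∈ span R (s - s) by simpa [hx0] using this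
  clear hx0
  induction hx using span_induction with
  | mem v hv => rw [hφ v hv, one_smul]; exact subset_span (Set.sub_mem_sub hv hv₀)
  | zero => simp
  | add x y _ _ hx hy =>
    convert add_mem hx hy using 1
    rw [map_add, add_smul]
    abel
  | smul c x _ hx =>
    convert smul_mem _ c hx using 1
    rw [map_smul, smul_eq_mul, mul_smul, smul_sub]

section Translation

variable [Field K] (m : MonomialOrder σ)

@[simp]
theorem leadExp_eq_degree (f : MvPolynomial σ K) : leadExp m f = m.degree f := rfl

theorem leadTerm_eq_leadingTerm :
    (leadTerm m : MvPolynomial σ K → MvPolynomial σ K) = m.leadingTerm := rfl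

theorem sPoly_eq (f g : MvPolynomial σ K) :
    sPoly m f g =
      monomial (m.degree f ⊔ m.degree g - m.degree f) (m.leadingCoeff f)⁻¹ * f -
        monomial (m.degree f ⊔ m.degree g - m.degree g) (m.leadingCoeff g)⁻¹ * g := rfl

theorem sPoly_mem {I : Ideal (MvPolynomial σ K)} {f g : MvPolynomial σ K} (hf : f ∈ I)
    (hg : g ∈ I) : sPoly m f g ∈ I :=
  sub_mem (I.mul_mem_left _ hf) (I.mul_mem_left _ hg)

theorem sPoly_eq_smul_sPolynomial {f g : MvPolynomial σ K} (hf : f ≠ 0) (hg : g ≠ 0) :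
    sPoly m f g = (m.leadingCoeff f * m.leadingCoeff g)⁻¹ • m.sPolynomial f g := by
  have hf' := m.leadingCoeff_ne_zero_iff.2 hf
  have hg' := m.leadingCoeff_ne_zero_iff.2 hg
  rw [MonomialOrder.sPolynomial_def, smul_sub, ← smul_mul_assoc, ← smul_mul_assoc,
    smul_monomial, smul_monomial, smul_eq_mul, smul_eq_mul, sPoly_eq]
  congr 3 <;> field_simp

theorem degree_sPoly_lt {f g : MvPolynomial σ K} (hf : f ≠ 0) (hg : g ≠ 0)
    (hS : sPoly m f g ≠ 0) :
    m.degree (sPoly m f g) ≺[m] m.degree f ⊔ m.degree g := by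
  rw [sPoly_eq_smul_sPolynomial m hf hg] at hS ⊢
  rw [MonomialOrder.degree_smul_of_isRegular (IsRegular.of_ne_zero (left_ne_zero_of_smul hS))]
  exact m.degree_sPolynomial_lt_sup_degree (right_ne_zero_of_smul hS)

end Translation

section GroebnerBasis

variable [Field K] (m : MonomialOrder σ)

theorem MonomialOrder.span_leadingTerm_image {S : Set (MvPolynomial σ K)}
    (hS : (0 : MvPolynomial σ K) ∉ S) :
    Ideal.span (m.leadingTerm '' S) =
      Ideal.span ((fun d => monomial d (1 : K)) '' (m.degree '' S)) := by
  rw [Set.image_image]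
  apply le_antisymm <;> rw [Ideal.span_le] <;> rintro _ ⟨f, hf, rfl⟩
  · rw [← m.C_mul_leadingCoeff_monomial_degree]
    exact Ideal.mul_mem_left _ _ (Ideal.subset_span ⟨f, hf, rfl⟩)
  · have hc := m.leadingCoeff_ne_zero_iff.2 (ne_of_mem_of_not_mem hf hS)
    have : monomial (m.degree f) (1 : K) = C (m.leadingCoeff f)⁻¹ * m.leadingTerm f := by
      rw [← m.C_mul_leadingCoeff_monomial_degree, ← mul_assoc, ← C_mul, inv_mul_cancel₀ hc,
        C_1, one_mul]
    simp only [SetLike.mem_coe, this]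
    exact Ideal.mul_mem_left _ _ (Ideal.subset_span ⟨f, hf, rfl⟩)

theorem isGroebnerBasis_iff {I : Ideal (MvPolynomial σ K)} {G : Set (MvPolynomial σ K)}
    (hfin : G.Finite) (hGI : G ⊆ I) (hG0 : (0 : MvPolynomial σ K) ∉ G) :
    IsGroebnerBasis m I G ↔ ∀ f ∈ I, f ≠ 0 → ∃ g ∈ G, m.degree g ≤ m.degree f := by
  have hGI' : G ⊆ {f | f ∈ I ∧ f ≠ 0} := fun g hg => ⟨hGI hg, ne_of_mem_of_not_mem hg hG0⟩
  have hle := Ideal.span_mono (Set.image_mono (f := fun d => monomial d (1 : K))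
    (Set.image_mono (f := m.degree) hGI'))
  have hmem (d : σ →₀ ℕ) : monomial d (1 : K) ∈
      Ideal.span ((fun d => monomial d 1) '' (m.degree '' G)) ↔ ∃ g ∈ G, m.degree g ≤ d := by
    classical
    rw [mem_ideal_span_monomial_image, support_monomial, if_neg one_ne_zero]
    simp
  rw [IsGroebnerBasis, leadTerm_eq_leadingTerm, m.span_leadingTerm_image hG0,
    m.span_leadingTerm_image fun h => h.2 rfl, ← hle.ge_iff_eq, Ideal.span_le, Set.image_image,
    Set.image_subset_iff]
  exact ⟨fun h f hf hf0 => (hmem _).1 (h.2.2 ⟨hf, hf0⟩),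
    fun h => ⟨hfin, hGI, fun f hf => (hmem _).2 (h f hf.1 hf.2)⟩⟩

end GroebnerBasis

section Division

variable [Field K] {m : MonomialOrder σ} {G : Finset (MvPolynomial σ K)} {f r : MvPolynomial σ K}

variable (m) in
theorem exists_isDivisionRemainder (hG0 : (0 : MvPolynomial σ K) ∉ G) (f : MvPolynomial σ K) :
    ∃ r, IsDivisionRemainder m G f r := by
  classical
  obtain ⟨q, r, hf, hdeg, hr⟩ := m.div (b := fun g : G => (g : MvPolynomial σ K))
    (fun g => (m.leadingCoeff_ne_zero_iff.2 (ne_of_mem_of_not_mem g.2 hG0)).isUnit) f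
  refine ⟨r, fun p => if hp : p ∈ G then q ⟨p, hp⟩ else 0, ?_,
    fun c hc g hg => hr c hc ⟨g, hg⟩, fun g hg _ => ?_⟩
  · rw [hf, Finsupp.linearCombination_apply, Finsupp.sum_fintype _ _ (by simp),
      ← Finset.sum_coe_sort G]
    simp [mul_comm]
  · simpa [hg, mul_comm] using hdeg ⟨g, hg⟩

theorem IsDivisionRemainder.sub_mem_span (h : IsDivisionRemainder m G f r) :
    f - r ∈ Ideal.span (G : Set (MvPolynomial σ K)) := by
  obtain ⟨a, rfl, -, -⟩ := h
  rw [add_sub_cancel_right]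
  exact Ideal.sum_mem _ fun g hg => Ideal.mul_mem_left _ _ (Ideal.subset_span hg)

variable (m) in
theorem isDivisionRemainder_zero_of_mem_span (hG0 : (0 : MvPolynomial σ K) ∉ G)
    (hG : ∀ f ∈ Ideal.span (G : Set (MvPolynomial σ K)), f ≠ 0 →
      ∃ g ∈ G, m.degree g ≤ m.degree f)
    (hf : f ∈ Ideal.span (G : Set (MvPolynomial σ K))) : IsDivisionRemainder m G f 0 := by
  obtain ⟨r, hr⟩ := exists_isDivisionRemainder m hG0 f
  obtain rfl : r = 0 := by
    by_contra hr0
    obtain ⟨g, hg, hle⟩ := hG r ((Submodule.sub_mem_iff_right _ hf).1 hr.sub_mem_span) hr0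
    obtain ⟨-, -, hrem, -⟩ := hr
    exact hrem _ (m.degree_mem_support hr0) g hg hle
  exact hr

end Division

namespace MonomialOrder

open Set Submodule

variable [Field K] (m : MonomialOrder σ)

noncomputable def monomialMulSpan (G : Set (MvPolynomial σ K)) (s : Set m.syn) :
    Submodule K (MvPolynomial σ K) :=
  span K {p | ∃ g ∈ G, ∃ α, m.toSyn (α + m.degree g) ∈ s ∧ p = monomial α 1 * g}

/-- Has leading term `X^D` when `g ≠ 0` and `deg g ∣ D`; otherwise `D - deg g` is truncated. -/
noncomputable def monicMul (D : σ →₀ ℕ) (g : MvPolynomial σ K) : MvPolynomial σ K :=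
  monomial (D - m.degree g) (m.leadingCoeff g)⁻¹ * g

variable {m} {G : Set (MvPolynomial σ K)} {s t : Set m.syn} {p : MvPolynomial σ K}

theorem monomialMulSpan_mono (h : s ⊆ t) : m.monomialMulSpan G s ≤ m.monomialMulSpan G t :=
  span_mono <| by rintro _ ⟨g, hg, α, hα, rfl⟩; exact ⟨g, hg, α, h hα, rfl⟩

theorem mul_mem_monomialMulSpan_Iic {a g : MvPolynomial σ K} {δ : m.syn} (hg : g ∈ G)
    (h : a * g ≠ 0 → m.toSyn (m.degree (a * g)) ≤ δ) :
    a * g ∈ m.monomialMulSpan G (Iic δ) := by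
  classical
  rcases eq_or_ne (a * g) 0 with h0 | h0
  · rw [h0]; exact zero_mem _
  have hdeg := h h0
  rw [m.degree_mul (left_ne_zero_of_mul h0) (right_ne_zero_of_mul h0), map_add] at hdeg
  rw [a.as_sum, Finset.sum_mul]
  refine sum_mem fun α hα => ?_
  rw [monomial_mul_eq_smul]
  refine smul_mem _ _ (subset_span ⟨g, hg, α, ?_, rfl⟩)
  rw [mem_Iic, map_add]
  exact le_trans (add_le_add_left (m.le_degree hα) _) hdeg

theorem coeff_eq_zero_of_mem_monomialMulSpan {d : σ →₀ ℕ} (hp : p ∈ m.monomialMulSpan G s)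
    (hd : ∀ δ ∈ s, δ < m.toSyn d) : p.coeff d = 0 := by
  suffices m.monomialMulSpan G s ≤ LinearMap.ker (lcoeff K d) from this hp
  refine span_le.2 ?_
  rintro _ ⟨g, hg, α, hα, rfl⟩
  rw [SetLike.mem_coe, LinearMap.mem_ker, lcoeff_apply]
  refine m.coeff_eq_zero_of_lt (lt_of_le_of_lt (m.degree_mul_le.trans ?_) (hd _ hα))
  rw [map_add, map_add]
  exact add_le_add_left (m.degree_monomial_le 1) _

theorem toSyn_degree_le_of_mem_monomialMulSpan_Iic {δ : m.syn}
    (hp : p ∈ m.monomialMulSpan G (Iic δ)) : m.toSyn (m.degree p) ≤ δ := by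
  obtain ⟨D, rfl⟩ := m.toSyn.surjective δ
  rw [degree_le_iff]
  intro c hc
  by_contra! h
  exact mem_support_iff.1 hc (coeff_eq_zero_of_mem_monomialMulSpan hp fun _ h' => h'.trans_lt h)

theorem exists_lt_of_mem_monomialMulSpan_Iio {δ : m.syn} (hp : p ∈ m.monomialMulSpan G (Iio δ))
    (hp0 : p ≠ 0) : ∃ δ' < δ, p ∈ m.monomialMulSpan G (Iic δ') := by
  suffices p = 0 ∨ ∃ δ' < δ, p ∈ m.monomialMulSpan G (Iic δ') from this.resolve_left hp0
  clear hp0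
  induction hp using span_induction with
  | mem x hx =>
    obtain ⟨g, hg, α, hα, rfl⟩ := hx
    exact .inr ⟨_, hα, subset_span ⟨g, hg, α, le_rfl, rfl⟩⟩
  | zero => exact .inl rfl
  | add x y _ _ hx hy =>
    rcases hx with rfl | ⟨δx, hδx, hx⟩
    · simpa using hy
    rcases hy with rfl | ⟨δy, hδy, hy⟩
    · simpa using .inr ⟨δx, hδx, hx⟩
    exact .inr ⟨max δx δy, max_lt hδx hδy,
      add_mem (monomialMulSpan_mono (Iic_subset_Iic.2 (le_max_left _ _)) hx)
        (monomialMulSpan_mono (Iic_subset_Iic.2 (le_max_right _ _)) hy)⟩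
  | smul c x _ hx =>
    rcases hx with rfl | ⟨δx, hδx, hx⟩
    · simp
    exact .inr ⟨δx, hδx, smul_mem _ c hx⟩

theorem monomial_mul_mem_monomialMulSpan_Iio {δ : m.syn} (hp : p ∈ m.monomialMulSpan G (Iio δ))
    (β : σ →₀ ℕ) (c : K) : monomial β c * p ∈ m.monomialMulSpan G (Iio (m.toSyn β + δ)) := by
  induction hp using span_induction with
  | mem x hx =>
    obtain ⟨g, hg, α, hα, rfl⟩ := hx
    rw [← mul_assoc, monomial_mul, mul_one, monomial_mul_eq_smul]
    refine smul_mem _ _ (subset_span ⟨g, hg, β + α, ?_, rfl⟩)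
    rw [mem_Iio, add_assoc, map_add]
    exact add_lt_add_right hα _
  | zero => rw [mul_zero]; exact zero_mem _
  | add x y _ _ hx hy => rw [mul_add]; exact add_mem hx hy
  | smul a x _ hx => rw [mul_smul_comm]; exact smul_mem _ a hx

theorem coeff_monicMul {D : σ →₀ ℕ} {g : MvPolynomial σ K} (hg0 : g ≠ 0) (hgD : m.degree g ≤ D) :
    (m.monicMul D g).coeff D = 1 := by
  have h := coeff_monomial_mul (m.degree g) (D - m.degree g) (m.leadingCoeff g)⁻¹ g
  rw [tsub_add_cancel_of_le hgD] at h
  rw [monicMul, h]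
  exact inv_mul_cancel₀ (m.leadingCoeff_ne_zero_iff.2 hg0)

theorem monicMul_sub_monicMul {D : σ →₀ ℕ} {g h : MvPolynomial σ K} (hgD : m.degree g ≤ D)
    (hhD : m.degree h ≤ D) :
    m.monicMul D g - m.monicMul D h =
      monomial (D - (m.degree g ⊔ m.degree h)) 1 * sPoly m g h := by
  rw [sPoly_eq, mul_sub, ← mul_assoc, ← mul_assoc, monomial_mul, monomial_mul, one_mul, one_mul,
    tsub_add_tsub_cancel (sup_le hgD hhD) le_sup_left,
    tsub_add_tsub_cancel (sup_le hgD hhD) le_sup_right, monicMul, monicMul]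

theorem monomialMulSpan_Iic_le (hG0 : (0 : MvPolynomial σ K) ∉ G) (D : σ →₀ ℕ) :
    m.monomialMulSpan G (Iic (m.toSyn D)) ≤
      m.monomialMulSpan G (Iio (m.toSyn D)) ⊔
        span K (m.monicMul D '' {g ∈ G | m.degree g ≤ D}) := by
  rw [monomialMulSpan, span_le]
  rintro _ ⟨g, hg, α, hα, rfl⟩
  rcases (mem_Iic.1 hα).lt_or_eq with hlt | heq
  · exact mem_sup_left (subset_span ⟨g, hg, α, hlt, rfl⟩)
  have hD : α + m.degree g = D := m.toSyn.injective heq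
  have hlc := m.leadingCoeff_ne_zero_iff.2 (ne_of_mem_of_not_mem hg hG0)
  have hmul : monomial α 1 * g = m.leadingCoeff g • m.monicMul D g := by
    rw [monicMul, ← hD, add_tsub_cancel_right, ← smul_mul_assoc, smul_monomial, smul_eq_mul,
      mul_inv_cancel₀ hlc]
  rw [SetLike.mem_coe, hmul]
  exact mem_sup_right (smul_mem _ _ (subset_span ⟨g, ⟨hg, hD ▸ le_add_self⟩, rfl⟩))

open scoped Pointwise in
theorem mem_monomialMulSpan_Iio_of_coeff_eq_zero (hG0 : (0 : MvPolynomial σ K) ∉ G)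
    (hS : ∀ g ∈ G, ∀ h ∈ G, g ≠ h →
      sPoly m g h ∈ m.monomialMulSpan G (Iio (m.toSyn (m.degree g ⊔ m.degree h))))
    {D : σ →₀ ℕ} (hp : p ∈ m.monomialMulSpan G (Iic (m.toSyn D))) (hpD : p.coeff D = 0) :
    p ∈ m.monomialMulSpan G (Iio (m.toSyn D)) := by
  obtain ⟨r, hr, y, hy, rfl⟩ := mem_sup.1 (monomialMulSpan_Iic_le hG0 D hp)
  have hrD : r.coeff D = 0 := coeff_eq_zero_of_mem_monomialMulSpan hr fun _ => id
  rw [coeff_add, hrD, zero_add] at hpD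
  have hdiff : span K (m.monicMul D '' {g ∈ G | m.degree g ≤ D} -
      m.monicMul D '' {g ∈ G | m.degree g ≤ D}) ≤ m.monomialMulSpan G (Iio (m.toSyn D)) := by
    rw [span_le]
    rintro _ ⟨_, ⟨g, ⟨hg, hgD⟩, rfl⟩, _, ⟨h, ⟨hh, hhD⟩, rfl⟩, rfl⟩
    rcases eq_or_ne g h with rfl | hgh
    · simp only [SetLike.mem_coe, sub_self, zero_mem]
    have := monomial_mul_mem_monomialMulSpan_Iio (hS g hg h hh hgh)
      (D - (m.degree g ⊔ m.degree h)) 1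
    rwa [← map_add, tsub_add_cancel_of_le (sup_le hgD hhD), ← monicMul_sub_monicMul hgD hhD]
      at this
  refine add_mem hr (hdiff (mem_span_sub_of_apply_eq_zero (lcoeff K D) ?_ hy hpD))
  rintro _ ⟨g, ⟨hg, hgD⟩, rfl⟩
  exact coeff_monicMul (ne_of_mem_of_not_mem hg hG0) hgD

theorem exists_degree_le_of_mem_monomialMulSpan_Iic (hG0 : (0 : MvPolynomial σ K) ∉ G)
    (hp : p ∈ m.monomialMulSpan G (Iic (m.toSyn (m.degree p)))) (hp0 : p ≠ 0) :
    ∃ g ∈ G, m.degree g ≤ m.degree p := by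
  obtain ⟨r, hr, y, hy, hry⟩ := mem_sup.1 (monomialMulSpan_Iic_le hG0 _ hp)
  by_contra! h
  rw [sep_eq_empty_iff_mem_false.2 fun g hg => (h g hg).elim, image_empty, span_empty,
    mem_bot] at hy
  rw [hy, add_zero] at hry
  subst hry
  exact m.coeff_degree_ne_zero_iff.2 hp0 (coeff_eq_zero_of_mem_monomialMulSpan hr fun _ => id)

theorem exists_mem_monomialMulSpan_Iic {G : Finset (MvPolynomial σ K)}
    (hp : p ∈ Ideal.span (G : Set (MvPolynomial σ K))) : ∃ δ, p ∈ m.monomialMulSpan G (Iic δ) := by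
  obtain ⟨a, -, rfl⟩ := Submodule.mem_span_finset.1 hp
  exact ⟨G.sup fun g => m.toSyn (m.degree (a g * g)),
    sum_mem fun g hg => mul_mem_monomialMulSpan_Iic hg fun _ =>
      Finset.le_sup (f := fun g => m.toSyn (m.degree (a g * g))) hg⟩

end MonomialOrder

section Criterion

open Set MonomialOrder

variable [Field K] {m : MonomialOrder σ} {G : Finset (MvPolynomial σ K)} {f : MvPolynomial σ K}

theorem IsDivisionRemainder.mem_monomialMulSpan_Iic (h : IsDivisionRemainder m G f 0) :
    f ∈ m.monomialMulSpan G (Iic (m.toSyn (m.degree f))) := by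
  obtain ⟨a, hf, -, hdeg⟩ := h
  rw [add_zero] at hf
  have hsum := Submodule.sum_mem _ fun g hg =>
    mul_mem_monomialMulSpan_Iic (δ := m.toSyn (m.degree f)) hg (hdeg g hg)
  rwa [← hf] at hsum

theorem sPoly_mem_monomialMulSpan_Iio {g h : MvPolynomial σ K} (hg : g ≠ 0) (hh : h ≠ 0)
    (hS : IsDivisionRemainder m G (sPoly m g h) 0) :
    sPoly m g h ∈ m.monomialMulSpan G (Iio (m.toSyn (m.degree g ⊔ m.degree h))) := by
  rcases eq_or_ne (sPoly m g h) 0 with h0 | h0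
  · rw [h0]; exact zero_mem _
  exact monomialMulSpan_mono (Iic_subset_Iio.2 (degree_sPoly_lt m hg hh h0))
    hS.mem_monomialMulSpan_Iic

theorem exists_degree_le_of_mem_span (hG0 : (0 : MvPolynomial σ K) ∉ G)
    (hS : ∀ g ∈ G, ∀ h ∈ G, g ≠ h →
      sPoly m g h ∈ m.monomialMulSpan G (Iio (m.toSyn (m.degree g ⊔ m.degree h))))
    (hf : f ∈ Ideal.span (G : Set (MvPolynomial σ K))) (hf0 : f ≠ 0) :
    ∃ g ∈ G, m.degree g ≤ m.degree f := by
  obtain ⟨δ, hδ⟩ := exists_mem_monomialMulSpan_Iic (m := m) hf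
  induction δ using WellFoundedLT.induction with
  | _ δ ih =>
    obtain ⟨D, rfl⟩ := m.toSyn.surjective δ
    rcases (toSyn_degree_le_of_mem_monomialMulSpan_Iic hδ).lt_or_eq with hlt | heq
    · obtain ⟨δ', hδ', hf'⟩ := exists_lt_of_mem_monomialMulSpan_Iio
        (mem_monomialMulSpan_Iio_of_coeff_eq_zero hG0 hS hδ (m.coeff_eq_zero_of_lt hlt)) hf0
      exact ih δ' hδ' hf'
    · rw [← heq] at hδ
      exact exists_degree_le_of_mem_monomialMulSpan_Iic hG0 hδ hf0

end Criterion

/-- Buchberger's criterion. A finite generating set `G` of an ideal `I`,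
consisting of nonzero polynomials, is a Groebner basis of `I` iff for all pairs of distinct
elements of `G` the S-polynomial has remainder zero on division by `G`. -/
theorem buchberger_criterion [Field K] (m : MonomialOrder σ)
    (I : Ideal (MvPolynomial σ K)) (G : Finset (MvPolynomial σ K))
    (h0 : (0 : MvPolynomial σ K) ∉ G)
    (hspan : Ideal.span (G : Set (MvPolynomial σ K)) = I) :
    IsGroebnerBasis m I (G : Set (MvPolynomial σ K)) ↔
      ∀ gi ∈ G, ∀ gj ∈ G, gi ≠ gj →
        IsDivisionRemainder m G (sPoly m gi gj) 0 := by
  subst hspan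
  have hne {g} (hg : g ∈ G) : g ≠ 0 := ne_of_mem_of_not_mem hg h0
  rw [isGroebnerBasis_iff m G.finite_toSet Ideal.subset_span h0]
  refine ⟨fun hGB gi hgi gj hgj _ => ?_, fun hS f hf hf0 => ?_⟩
  · exact isDivisionRemainder_zero_of_mem_span m h0 hGB
      (sPoly_mem m (Ideal.subset_span hgi) (Ideal.subset_span hgj))
  · exact exists_degree_le_of_mem_span h0 (fun g hg h hh hgh =>
      sPoly_mem_monomialMulSpan_Iio (hne hg) (hne hh) (hS g hg h hh hgh)) hf hf0
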